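/- Combining the two previous identities: the function ψ_L(n, t) defined by the Fourier integral representation satisfies the symmetry relation (t − n) ψ_L(−n, t) = (−1)^n (t + n) ψ_L(n, t) for all integers n and positive integers t with n ≡ t (mod 2). -/

import Mathlib

/-!
Write `v = ω'`, so that `v θ = cos θ / √(1 + cos² θ)`, and `F_m θ = exp (-i (t ω θ + m θ))`.
Then `2π ψ_L(m, t) = A_m + B_m` with `A_m = ∫ F_m` and `B_m = ∫ v F_m` over a period.
Since `F_m' = -i (t v + m) F_m` and `F_m` is `2π`-periodic, `t B_m + m A_m = 0`.
The substitution `θ ↦ π - θ` fixes `ω`, negates `v` and turns `F_n` into `(-1)^n F_{-n}`, so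
`2π ψ_L(n, t) = (-1)^n (A_{-n} - B_{-n})`, and with `A = A_{-n}`, `B = B_{-n}` the identity reads
`(t - n) (A + B) - (t + n) (A - B) = 2 (t B - n A) = 0`.
-/

open Real

noncomputable def ω (θ : ℝ) : ℝ := Real.arcsin (Real.sin θ / Real.sqrt 2)

noncomputable def ψL (n : ℤ) (t : ℕ) : ℂ :=
  (1 / (2 * π)) * ∫ θ in (-π)..π,
    (1 + ((Real.cos θ / Real.sqrt (1 + Real.cos θ ^ 2) : ℝ) : ℂ)) *
      Complex.exp (-Complex.I * ((t : ℂ) * (ω θ : ℂ) + (n : ℂ) * (θ : ℂ)))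

open MeasureTheory Function

section Periodic

variable {E : Type*} [NormedAddCommGroup E] [NormedSpace ℝ E] {a b : ℝ}

theorem Function.Periodic.intervalIntegral_comp_sub_left {f : ℝ → E} (hf : Periodic f (b - a))
    (d : ℝ) : ∫ x in a..b, f (d - x) = ∫ x in a..b, f x := by
  have h := hf.intervalIntegral_add_eq (d - b) a
  rw [show d - b + (b - a) = d - a by ring, add_sub_cancel] at h
  rw [intervalIntegral.integral_comp_sub_left, h]

theorem Function.Periodic.intervalIntegral_eq_zero_of_hasDerivAt [CompleteSpace E]
    {f f' : ℝ → E} (hf : Periodic f (b - a)) (hderiv : ∀ x, HasDerivAt f (f' x) x)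
    (hint : IntervalIntegrable f' volume a b) : ∫ x in a..b, f' x = 0 := by
  have hab : f b = f a := by simpa using hf a
  rw [intervalIntegral.integral_eq_sub_of_hasDerivAt (fun x _ => hderiv x) hint, hab, sub_self]

theorem periodic_pi_sub_neg_pi {α : Type*} {f : ℝ → α} (hf : Periodic f (2 * π)) :
    Periodic f (π - -π) := by
  rwa [sub_neg_eq_add, ← two_mul]

end Periodic

namespace PsiL

noncomputable def groupVelocity (θ : ℝ) : ℝ := cos θ / √(1 + cos θ ^ 2)

noncomputable def phase (t : ℕ) (m : ℤ) (θ : ℝ) : ℂ :=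
  Complex.exp (-Complex.I * ((t : ℂ) * (ω θ : ℂ) + (m : ℂ) * (θ : ℂ)))

theorem ψL_eq_integral_phase (m : ℤ) (t : ℕ) :
    ψL m t = 1 / (2 * π) * ∫ θ in (-π)..π, (1 + (groupVelocity θ : ℂ)) * phase t m θ :=
  rfl

theorem abs_sin_div_sqrt_two_lt_one (θ : ℝ) : |sin θ / √2| < 1 := by
  rw [abs_div, abs_of_pos (by positivity : (0 : ℝ) < √2), div_lt_one (by positivity)]
  exact (abs_sin_le_one θ).trans_lt one_lt_sqrt_two

theorem hasDerivAt_ω (θ : ℝ) : HasDerivAt ω (groupVelocity θ) θ := by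
  obtain ⟨hlt, hgt⟩ := abs_lt.mp (abs_sin_div_sqrt_two_lt_one θ)
  refine ((hasDerivAt_arcsin hlt.ne' hgt.ne).comp θ
    ((hasDerivAt_sin θ).div_const √2)).congr_deriv ?_
  have h : 1 - (sin θ / √2) ^ 2 = (1 + cos θ ^ 2) / 2 := by
    rw [div_pow, sq_sqrt zero_le_two]
    linarith [sin_sq_add_cos_sq θ]
  have : √(1 + cos θ ^ 2) ≠ 0 := by positivity
  rw [h, sqrt_div (by positivity) 2, groupVelocity]
  field_simp

theorem continuous_ω : Continuous ω :=
  continuous_arcsin.comp (continuous_sin.div_const _)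

theorem ω_periodic : Periodic ω (2 * π) := fun θ => by
  rw [ω, ω, sin_add_two_pi]

theorem ω_pi_sub (θ : ℝ) : ω (π - θ) = ω θ := by
  rw [ω, ω, sin_pi_sub]

theorem continuous_groupVelocity : Continuous groupVelocity :=
  continuous_cos.div (by fun_prop) fun θ => by positivity

theorem groupVelocity_periodic : Periodic groupVelocity (2 * π) := fun θ => by
  rw [groupVelocity, groupVelocity, cos_add_two_pi]

theorem groupVelocity_pi_sub (θ : ℝ) : groupVelocity (π - θ) = -groupVelocity θ := by
  rw [groupVelocity, groupVelocity, cos_pi_sub, neg_sq, neg_div]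

theorem continuous_phase (t : ℕ) (m : ℤ) : Continuous (phase t m) := by
  have := continuous_ω
  unfold phase
  fun_prop

theorem hasDerivAt_phase (t : ℕ) (m : ℤ) (θ : ℝ) :
    HasDerivAt (phase t m) (-Complex.I * (t * groupVelocity θ + m) * phase t m θ) θ := by
  have hω := (hasDerivAt_ω θ).ofReal_comp
  have hid := (hasDerivAt_id θ).ofReal_comp
  refine ((((hω.const_mul (t : ℂ)).add (hid.const_mul (m : ℂ))).const_mul
    (-Complex.I)).cexp).congr_deriv ?_
  simp only [phase, Pi.add_apply, id, Complex.ofReal_one]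
  ring

theorem phase_periodic (t : ℕ) (m : ℤ) : Periodic (phase t m) (2 * π) := fun θ => by
  have e : -Complex.I * (t * (ω θ : ℂ) + m * ((θ + 2 * π : ℝ) : ℂ))
      = -Complex.I * (t * ω θ + m * θ) + (-m : ℤ) * (2 * π * Complex.I) := by
    push_cast; ring
  rw [phase, phase, ω_periodic, e, Complex.exp_add, Complex.exp_int_mul_two_pi_mul_I, mul_one]

theorem phase_pi_sub (t : ℕ) (m : ℤ) (θ : ℝ) :
    phase t m (π - θ) = (-1) ^ m * phase t (-m) θ := by
  have e : -Complex.I * (t * (ω θ : ℂ) + m * ((π - θ : ℝ) : ℂ))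
      = (-m : ℤ) * (π * Complex.I) + -Complex.I * (t * ω θ + (-m : ℤ) * θ) := by
    push_cast; ring
  rw [phase, phase, ω_pi_sub, e, Complex.exp_add, Complex.exp_int_mul, Complex.exp_pi_mul_I,
    zpow_neg, ← inv_zpow, inv_neg, inv_one]

theorem intervalIntegrable_phase (t : ℕ) (m : ℤ) (a b : ℝ) :
    IntervalIntegrable (phase t m) volume a b :=
  (continuous_phase t m).intervalIntegrable a b

theorem intervalIntegrable_groupVelocity_mul_phase (t : ℕ) (m : ℤ) (a b : ℝ) :
    IntervalIntegrable (fun θ => (groupVelocity θ : ℂ) * phase t m θ) volume a b :=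
  ((Complex.continuous_ofReal.comp continuous_groupVelocity).mul
    (continuous_phase t m)).intervalIntegrable a b

theorem integral_one_add_mul_phase (t : ℕ) (m : ℤ) :
    ∫ θ in (-π)..π, (1 + (groupVelocity θ : ℂ)) * phase t m θ
      = (∫ θ in (-π)..π, phase t m θ) + ∫ θ in (-π)..π, (groupVelocity θ : ℂ) * phase t m θ := by
  simp only [add_mul, one_mul]
  exact intervalIntegral.integral_add (intervalIntegrable_phase t m _ _)
    (intervalIntegrable_groupVelocity_mul_phase t m _ _)

theorem integral_one_sub_mul_phase (t : ℕ) (m : ℤ) :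
    ∫ θ in (-π)..π, (1 - (groupVelocity θ : ℂ)) * phase t m θ
      = (∫ θ in (-π)..π, phase t m θ) - ∫ θ in (-π)..π, (groupVelocity θ : ℂ) * phase t m θ := by
  simp only [sub_mul, one_mul]
  exact intervalIntegral.integral_sub (intervalIntegrable_phase t m _ _)
    (intervalIntegrable_groupVelocity_mul_phase t m _ _)

theorem integral_groupVelocity_mul_phase (t : ℕ) (m : ℤ) :
    t * (∫ θ in (-π)..π, (groupVelocity θ : ℂ) * phase t m θ) + m * ∫ θ in (-π)..π, phase t m θ
      = 0 := by
  have hv := intervalIntegrable_groupVelocity_mul_phase t m (-π) π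
  have hF := intervalIntegrable_phase t m (-π) π
  have h : ∫ θ in (-π)..π, -Complex.I * (t * (groupVelocity θ * phase t m θ) + m * phase t m θ)
      = 0 :=
    (periodic_pi_sub_neg_pi (phase_periodic t m)).intervalIntegral_eq_zero_of_hasDerivAt
      (fun θ => (hasDerivAt_phase t m θ).congr_deriv (by ring))
      (((hv.const_mul _).add (hF.const_mul _)).const_mul _)
  rw [intervalIntegral.integral_const_mul, intervalIntegral.integral_add (hv.const_mul _)
    (hF.const_mul _), intervalIntegral.integral_const_mul, intervalIntegral.integral_const_mul,
    mul_eq_zero] at h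
  exact h.resolve_left (neg_ne_zero.mpr Complex.I_ne_zero)

theorem integral_one_add_mul_phase_reflect (t : ℕ) (n : ℤ) :
    ∫ θ in (-π)..π, (1 + (groupVelocity θ : ℂ)) * phase t n θ
      = (-1) ^ n * ∫ θ in (-π)..π, (1 - (groupVelocity θ : ℂ)) * phase t (-n) θ := by
  have hper : Periodic (fun θ => (1 + (groupVelocity θ : ℂ)) * phase t n θ) (2 * π) := fun θ => by
    simp only [groupVelocity_periodic θ, phase_periodic t n θ]
  rw [← (periodic_pi_sub_neg_pi hper).intervalIntegral_comp_sub_left π,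
    ← intervalIntegral.integral_const_mul]
  congr 1 with θ
  rw [groupVelocity_pi_sub, phase_pi_sub]
  push_cast
  ring

end PsiL

open PsiL in
theorem stmt_12_general (n : ℤ) (t : ℕ) :
    ((t : ℂ) - (n : ℂ)) * ψL (-n) t = (-1 : ℂ) ^ n * ((t : ℂ) + (n : ℂ)) * ψL n t := by
  have hibp := integral_groupVelocity_mul_phase t (-n)
  have hsign : (-1 : ℂ) ^ n * (-1) ^ n = 1 := by rw [← mul_zpow]; norm_num
  rw [ψL_eq_integral_phase, ψL_eq_integral_phase, integral_one_add_mul_phase_reflect t n,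
    integral_one_sub_mul_phase, integral_one_add_mul_phase]
  push_cast at hibp
  set A := ∫ θ in (-π)..π, phase t (-n) θ
  set B := ∫ θ in (-π)..π, (groupVelocity θ : ℂ) * phase t (-n) θ
  linear_combination 2 / (2 * π) * hibp - (t + n) * (A - B) / (2 * π) * hsign

theorem stmt_12 (n : ℤ) (t : ℕ) (ht : 0 < t) (hpar : n ≡ (t : ℤ) [ZMOD 2]) :
    ((t : ℂ) - (n : ℂ)) * ψL (-n) t = (-1 : ℂ) ^ n * ((t : ℂ) + (n : ℂ)) * ψL n t :=
  stmt_12_general n t
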